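/- arXiv:1109.6180 — 2 statements merged into one kernel-verified Lean document; each statement's English description precedes it below -/
import Mathlib

section
/- Let p ≥ 3 be an odd integer. If m is a ρ-invariant monomial of R and u_1, u_2 are variables such that u_1^2 divides m and ρ acts on u_1 and u_2 by multiplication with the same p-th root of unity, then the polynomial m·u_2 lies in the Hilbert ideal I_H. -/
open MvPolynomial

noncomputable section

abbrev DVar (r s : ℕ) := (Fin r ⊕ Fin r) ⊕ (Fin s ⊕ Fin s)

def dswap {r s : ℕ} : DVar r s → DVar r s
  | .inl (.inl i) => .inl (.inr i)
  | .inl (.inr i) => .inl (.inl i)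
  | .inr (.inl j) => .inr (.inr j)
  | .inr (.inr j) => .inr (.inl j)

def sigmaMap (F : Type*) [Field F] (r s : ℕ) :
    MvPolynomial (DVar r s) F →ₐ[F] MvPolynomial (DVar r s) F :=
  MvPolynomial.rename dswap

def rhoCoeff {F : Type*} [Field F] {r s : ℕ} (lam : Fin r → F) : DVar r s → F
  | .inl (.inl i) => lam i
  | .inl (.inr i) => (lam i)⁻¹
  | .inr _ => 1

def rhoMap (F : Type*) [Field F] (r s : ℕ) (lam : Fin r → F) :
    MvPolynomial (DVar r s) F →ₐ[F] MvPolynomial (DVar r s) F :=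
  MvPolynomial.aeval fun v => MvPolynomial.C (rhoCoeff lam v) * MvPolynomial.X v

def HilbertIdeal (F : Type*) [Field F] (r s : ℕ) (lam : Fin r → F) :
    Ideal (MvPolynomial (DVar r s) F) :=
  Ideal.span {f | sigmaMap F r s f = f ∧ rhoMap F r s lam f = f ∧ constantCoeff f = 0}

def IsMonomial {σ F : Type*} [CommSemiring F] (f : MvPolynomial σ F) : Prop :=
  ∃ d : σ →₀ ℕ, f = monomial d 1

def GSet (F : Type*) [Field F] (r s p : ℕ) (lam : Fin r → F) :
    Set (MvPolynomial (DVar r s) F) :=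
  {f | ∃ m, IsMonomial m ∧ rhoMap F r s lam m = m ∧ sigmaMap F r s m ≠ m ∧
      m.totalDegree ≤ p ∧ f = m + sigmaMap F r s m} ∪
  {f | ∃ (m : MvPolynomial (DVar r s) F) (v : DVar r s), IsMonomial m ∧ rhoMap F r s lam m = m ∧ m.totalDegree ≤ p ∧
      X v ∣ m ∧ f = X v * m} ∪
  {f | (∃ i : Fin r, f = X (Sum.inl (Sum.inl i)) * X (Sum.inl (Sum.inr i))) ∨
       (∃ j : Fin s, f = X (Sum.inr (Sum.inl j)) * X (Sum.inr (Sum.inr j)))}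

def lmExp {σ F : Type*} [CommSemiring F] (mo : MonomialOrder σ) (f : MvPolynomial σ F) :
    σ →₀ ℕ :=
  mo.toSyn.symm (f.support.sup fun d => mo.toSyn d)

def wc {F : Type*} [Field F] {r s : ℕ} (lam : Fin r → F) (d : DVar r s →₀ ℕ) : F :=
  d.prod fun v k => rhoCoeff lam v ^ k

lemma dswap_dswap {r s : ℕ} (v : DVar r s) : dswap (dswap v) = v := by
  rcases v with (i|i)|(j|j) <;> rfl

lemma dswap_inj {r s : ℕ} : Function.Injective (dswap : DVar r s → DVar r s) :=
  Function.Involutive.injective dswap_dswap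

lemma rhoMap_monomial {F : Type*} [Field F] {r s : ℕ} (lam : Fin r → F) (d : DVar r s →₀ ℕ) :
    rhoMap F r s lam (monomial d (1:F)) = C (wc lam d) * monomial d 1 := by
  rw [rhoMap, aeval_monomial, monomial_eq, map_one, one_mul, C_1, one_mul, wc]
  rw [Finsupp.prod, Finsupp.prod, Finsupp.prod, map_prod, ← Finset.prod_mul_distrib]
  refine Finset.prod_congr rfl fun v _ => ?_
  rw [mul_pow, map_pow]

lemma sigmaMap_monomial {F : Type*} [Field F] {r s : ℕ} (d : DVar r s →₀ ℕ) :
    sigmaMap F r s (monomial d (1:F)) = monomial (d.mapDomain dswap) 1 := by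
  rw [sigmaMap]; exact rename_monomial _ _ _

lemma wc_add {F : Type*} [Field F] {r s : ℕ} (lam : Fin r → F) (d e : DVar r s →₀ ℕ) :
    wc lam (d + e) = wc lam d * wc lam e :=
  Finsupp.prod_add_index' (fun v => pow_zero _) (fun v a b => pow_add _ _ _)

lemma wc_single {F : Type*} [Field F] {r s : ℕ} (lam : Fin r → F) (v : DVar r s) :
    wc lam (Finsupp.single v 1) = rhoCoeff lam v := by
  rw [wc, Finsupp.prod_single_index, pow_one]; exact pow_zero _


lemma rc_mul_dswap {F : Type*} [Field F] {r s p : ℕ} (hp : 3 ≤ p) (lam : Fin r → F)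
    (hlam : ∀ i, lam i ^ p = 1) (v : DVar r s) :
    rhoCoeff lam v * rhoCoeff lam (dswap v) = 1 := by
  have h0 : ∀ i, lam i ≠ 0 := fun i h => by
    have := hlam i; rw [h, zero_pow (by omega)] at this; exact zero_ne_one this
  rcases v with (i|i)|(j|j)
  · exact mul_inv_cancel₀ (h0 i)
  · exact inv_mul_cancel₀ (h0 i)
  · exact one_mul 1
  · exact one_mul 1

lemma wc_mapDomain {F : Type*} [Field F] {r s : ℕ} (lam : Fin r → F) (e : DVar r s →₀ ℕ)
    (h : ∀ v : DVar r s, rhoCoeff lam v * rhoCoeff lam (dswap v) = 1) (he : wc lam e = 1) :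
    wc lam (e.mapDomain dswap) = 1 := by
  have h1 : wc lam (e.mapDomain dswap) = e.prod fun v k => rhoCoeff lam (dswap v) ^ k :=
    Finsupp.prod_mapDomain_index_inj dswap_inj
  have h2 : wc lam e * wc lam (e.mapDomain dswap) = 1 := by
    rw [h1, wc, Finsupp.prod, Finsupp.prod, ← Finset.prod_mul_distrib]
    refine Finset.prod_eq_one fun v _ => ?_
    rw [← mul_pow, h v, one_pow]
  rwa [he, one_mul] at h2

lemma mapDomain_dswap_dswap {r s : ℕ} (x : DVar r s →₀ ℕ) :
    Finsupp.mapDomain dswap (Finsupp.mapDomain dswap x) = x := by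
  rw [← Finsupp.mapDomain_comp]
  have : (dswap ∘ dswap : DVar r s → DVar r s) = id := funext dswap_dswap
  rw [this, Finsupp.mapDomain_id]

/-- For `p ≥ 3` an odd integer, if `m` is a `ρ`-invariant monomial, `u₁, u₂` are
variables with `u₁² ∣ m` and `ρ` acts on `u₁` and `u₂` by multiplication with the same root of
unity, then `m·u₂` lies in the Hilbert ideal `I_H`. -/
theorem monomial_mul_var_mem_hilbertIdeal
    {F : Type*} [Field F] [CharP F 2] {r s p : ℕ} (hp : 3 ≤ p) (hodd : Odd p)
    (ζ : F) (hζ : IsPrimitiveRoot ζ p)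
    (lam : Fin r → F) (hlam : ∀ i, lam i ^ p = 1 ∧ lam i ≠ 1)
    (m : MvPolynomial (DVar r s) F) (hm : IsMonomial m) (hρ : rhoMap F r s lam m = m)
    (u₁ u₂ : DVar r s) (hu₁ : X u₁ ^ 2 ∣ m) (hsame : rhoCoeff lam u₁ = rhoCoeff lam u₂) :
    m * X u₂ ∈ HilbertIdeal F r s lam := by
  classical
  obtain ⟨d, rfl⟩ := hm
  have hrc : ∀ v : DVar r s, rhoCoeff lam v * rhoCoeff lam (dswap v) = 1 :=
    rc_mul_dswap hp lam (fun i => (hlam i).1)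
  -- exponent of u₁ is at least 2
  have hd2 : 2 ≤ d u₁ := by
    rw [X_pow_eq_monomial, monomial_one_dvd_monomial_one] at hu₁
    exact Finsupp.single_le_iff.mp hu₁
  -- the weight of d is 1
  have hwd : wc lam d = 1 := by
    rw [rhoMap_monomial] at hρ
    have h := congrArg (coeff d) hρ
    simpa [coeff_C_mul, coeff_monomial] using h
  set d' : DVar r s →₀ ℕ := d - Finsupp.single u₁ 1 with hd'
  set e : DVar r s →₀ ℕ := d' + Finsupp.single u₂ 1 with he
  have hle : Finsupp.single u₁ 1 ≤ d := Finsupp.single_le_iff.mpr (by omega)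
  have hsplit : d' + Finsupp.single u₁ 1 = d := tsub_add_cancel_of_le hle
  have hwe : wc lam e = 1 := by
    have h1 : wc lam d' * rhoCoeff lam u₁ = 1 := by
      rw [← wc_single lam u₁, ← wc_add, hsplit]; exact hwd
    rw [he, wc_add, wc_single, ← hsame]; exact h1
  have heu : 1 ≤ e u₁ := by
    have h : e u₁ = d u₁ - 1 + (Finsupp.single u₂ 1) u₁ := by
      simp [he, hd', Finsupp.tsub_apply]
    omega
  set ee : DVar r s →₀ ℕ := e.mapDomain dswap with hee
  have heeu : ee (dswap u₁) = e u₁ := Finsupp.mapDomain_apply dswap_inj _ _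
  have hwee : wc lam ee = 1 := wc_mapDomain lam e hrc hwe
  have hle2 : Finsupp.single (dswap u₁) 1 ≤ ee :=
    Finsupp.single_le_iff.mpr (by omega)
  set qe : DVar r s →₀ ℕ := ee - Finsupp.single (dswap u₁) 1 with hqe
  have hsplit2 : qe + Finsupp.single (dswap u₁) 1 = ee := tsub_add_cancel_of_le hle2
  set g₁ : MvPolynomial (DVar r s) F := monomial e 1 + monomial ee 1 with hg₁
  set g₂ : MvPolynomial (DVar r s) F :=
    monomial (Finsupp.single u₁ 1 + Finsupp.single (dswap u₁) 1) 1 with hg₂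
  -- exponent identities
  have hexp1 : e + Finsupp.single u₁ 1 = d + Finsupp.single u₂ 1 := by
    rw [he, add_right_comm, hsplit]
  have hexp2 : (Finsupp.single u₁ 1 + Finsupp.single (dswap u₁) 1) + qe
      = ee + Finsupp.single u₁ 1 := by
    rw [add_assoc, add_comm (Finsupp.single (dswap u₁) 1) qe, hsplit2, add_comm]
  have hA : g₁ * X u₁ = monomial d 1 * X u₂ + g₂ * monomial qe 1 := by
    rw [hg₁, hg₂, X, X, add_mul, monomial_mul, monomial_mul, monomial_mul, monomial_mul,
      hexp1, hexp2]
  -- nonzero exponents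
  have hene : e ≠ 0 := fun h => by simp [h] at heu
  have heene : ee ≠ 0 := fun h => by rw [h] at heeu; simp at heeu; omega
  -- g₁ is a generator
  have hg₁mem : g₁ ∈ HilbertIdeal F r s lam := by
    refine Ideal.subset_span ⟨?_, ?_, ?_⟩
    · rw [hg₁, map_add, sigmaMap_monomial, sigmaMap_monomial, ← hee,
        hee, mapDomain_dswap_dswap, add_comm]
    · rw [hg₁, map_add, rhoMap_monomial, rhoMap_monomial, hwe, hwee, C_1, one_mul, one_mul]
    · rw [hg₁, map_add, constantCoeff_monomial, constantCoeff_monomial,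
        if_neg hene, if_neg heene, add_zero]
  -- g₂ is a generator
  have hg₂mem : g₂ ∈ HilbertIdeal F r s lam := by
    refine Ideal.subset_span ⟨?_, ?_, ?_⟩
    · rw [hg₂, sigmaMap_monomial, Finsupp.mapDomain_add, Finsupp.mapDomain_single,
        Finsupp.mapDomain_single, dswap_dswap, add_comm]
    · rw [hg₂, rhoMap_monomial, wc_add, wc_single, wc_single, hrc, C_1, one_mul]
    · rw [hg₂, constantCoeff_monomial, if_neg]
      intro h
      have := congrArg (fun f : DVar r s →₀ ℕ => f u₁) h
      simp [Finsupp.single_apply] at this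
  have hfinal : monomial d (1:F) * X u₂ = g₁ * X u₁ - g₂ * monomial qe 1 := by
    rw [hA]; ring
  rw [hfinal]
  exact Ideal.sub_mem _ (Ideal.mul_mem_right _ _ hg₁mem) (Ideal.mul_mem_right _ _ hg₂mem)
end
end

section
/- Let p ≥ 3 be an odd integer. Every ρ-invariant monomial m of R of degree at least p+1 can be written as a product m = m_1·m_2 of two ρ-invariant monomials m_1, m_2 whose degrees are both strictly smaller than the degree of m. -/
open MvPolynomial

noncomputable section

/-! The ρ-eigenvalue of a monomial is the product of the eigenvalues of its variables, all of
which are `p`-th roots of unity. Among any `p` of these variables, listed in some order, two of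
the `p + 1` prefix products of eigenvalues lie in the same one of at most `p` roots of unity, so a
nonempty block of at most `p` consecutive variables has eigenvalue `1`. This block is an invariant
monomial `m₁` with `1 ≤ deg m₁ ≤ p < deg m`, and its cofactor `m₂ = m / m₁` is invariant as well. -/

theorem List.exists_infix_prod_map_eq_one {α G : Type*} [Group G] [Finite G] (f : α → G)
    (l : List α) (hl : Nat.card G ≤ l.length) :
    ∃ t, t <:+: l ∧ t ≠ [] ∧ t.length ≤ Nat.card G ∧ (t.map f).prod = 1 := by
  have := Fintype.ofFinite G
  -- Two of the `card G + 1` prefix products of `l.map f` coincide.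
  obtain ⟨i, j, hij, hprod⟩ := Fintype.exists_ne_map_eq_of_card_lt
    (fun k : Fin (Nat.card G + 1) => ((l.take k).map f).prod)
    (by simp [Nat.card_eq_fintype_card])
  wlog hlt : i < j generalizing i j
  · exact this j i hij.symm hprod.symm (lt_of_le_of_ne (not_lt.1 hlt) hij.symm)
  have hj := j.is_lt
  refine ⟨(l.drop i).take (j - i),
    (List.take_prefix _ _).isInfix.trans (List.drop_suffix _ _).isInfix, ?_, ?_, ?_⟩
  · rw [← List.length_pos_iff, List.length_take, List.length_drop]; omega
  · rw [List.length_take, List.length_drop]; omega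
  · have hsplit : l.take j = l.take i ++ (l.drop i).take (j - i) := by
      rw [← List.take_add, Nat.add_sub_cancel' hlt.le]
    simp only [hsplit, List.map_append, List.prod_append] at hprod
    exact left_eq_mul.mp hprod

theorem Finsupp.prod_map_toMultiset {α M : Type*} [CommMonoid M] (d : α →₀ ℕ) (f : α → M) :
    (d.toMultiset.map f).prod = d.prod fun a k => f a ^ k := by
  rw [Finsupp.toMultiset_map, Finsupp.prod_toMultiset,
    Finsupp.prod_mapDomain_index (fun _ => pow_zero _) (fun _ _ _ => pow_add _ _ _)]

theorem Finsupp.exists_le_prod_pow_eq_one {α G : Type*} [CommGroup G] [Finite G] (f : α → G)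
    (d : α →₀ ℕ) (hd : Nat.card G ≤ d.degree) :
    ∃ e ≤ d, e ≠ 0 ∧ e.degree ≤ Nat.card G ∧ (e.prod fun a k => f a ^ k) = 1 := by
  classical
  have hlen : d.toMultiset.toList.length = d.degree := by
    rw [Multiset.length_toList, Finsupp.card_toMultiset]; rfl
  obtain ⟨t, htd, ht0, htG, htf⟩ :=
    List.exists_infix_prod_map_eq_one f d.toMultiset.toList (hlen ▸ hd)
  have hle : (t : Multiset α) ≤ d.toMultiset := by
    simpa only [Multiset.coe_toList] using Multiset.coe_le.2 htd.sublist.subperm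
  refine ⟨Multiset.toFinsupp t, ?_, by simpa using ht0, ?_, ?_⟩
  · simpa only [Finsupp.toMultiset_toFinsupp] using Multiset.toFinsupp_strictMono.monotone hle
  · show (Multiset.toFinsupp (t : Multiset α)).sum (fun _ => id) ≤ _
    rw [Multiset.toFinsupp_sum_eq, Multiset.coe_card]
    exact htG
  · rw [← Finsupp.prod_map_toMultiset, Multiset.toFinsupp_toMultiset, Multiset.map_coe,
      Multiset.prod_coe, htf]

theorem Finsupp.exists_le_prod_pow_eq_one_of_pow_eq_one {α R : Type*} [CommRing R] [IsDomain R]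
    {n : ℕ} [NeZero n] (f : α → R) (hf : ∀ a, f a ^ n = 1) (d : α →₀ ℕ) (hd : n ≤ d.degree) :
    ∃ e ≤ d, e ≠ 0 ∧ e.degree ≤ n ∧ (e.prod fun a k => f a ^ k) = 1 := by
  obtain ⟨e, hed, he0, hen, he⟩ := Finsupp.exists_le_prod_pow_eq_one
    (fun a => rootsOfUnity.mkOfPowEq (f a) (hf a)) d ((card_rootsOfUnity R n).trans hd)
  refine ⟨e, hed, he0, hen.trans (card_rootsOfUnity R n), ?_⟩
  simpa [map_finsuppProd] using
    congrArg ((Units.coeHom R).comp (rootsOfUnity n R).subtype) he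

theorem MvPolynomial.totalDegree_monomial_one {σ R : Type*} [CommSemiring R] [Nontrivial R]
    (d : σ →₀ ℕ) : (monomial d (1 : R)).totalDegree = d.degree :=
  totalDegree_monomial d one_ne_zero

section Rho

variable {F : Type*} [Field F] {r s : ℕ} (lam : Fin r → F)

theorem rhoCoeff_pow_eq_one {p : ℕ} (hlam : ∀ i, lam i ^ p = 1) (v : DVar r s) :
    rhoCoeff lam v ^ p = 1 := by
  rcases v with (i | i) | j
  · exact hlam i
  · rw [rhoCoeff, inv_pow, hlam i, inv_one]
  · exact one_pow p

theorem rhoMap_monomial_s6 (d : DVar r s →₀ ℕ) (a : F) :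
    rhoMap F r s lam (monomial d a) =
      monomial d ((d.prod fun v k => rhoCoeff lam v ^ k) * a) := by
  simp only [rhoMap, aeval_monomial, mul_pow, Finsupp.prod_mul, ← map_pow, algebraMap_eq]
  rw [monomial_eq, C_mul, ← map_finsuppProd]
  ring

theorem rhoMap_monomial_one_eq_self_iff (d : DVar r s →₀ ℕ) :
    rhoMap F r s lam (monomial d 1) = monomial d 1 ↔
      (d.prod fun v k => rhoCoeff lam v ^ k) = 1 := by
  rw [rhoMap_monomial_s6, mul_one]
  exact ⟨fun h => by simpa using congrArg (coeff d) h, fun h => by rw [h]⟩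

end Rho

theorem rho_invariant_monomial_decomposition_general
    {F : Type*} [Field F] {r s p : ℕ} (hp : 3 ≤ p)
    (lam : Fin r → F) (hlam : ∀ i, lam i ^ p = 1 ∧ lam i ≠ 1)
    (m : MvPolynomial (DVar r s) F) (hm : IsMonomial m) (hρ : rhoMap F r s lam m = m)
    (hdeg : p + 1 ≤ m.totalDegree) :
    ∃ m₁ m₂ : MvPolynomial (DVar r s) F,
      IsMonomial m₁ ∧ IsMonomial m₂ ∧
      rhoMap F r s lam m₁ = m₁ ∧ rhoMap F r s lam m₂ = m₂ ∧
      m = m₁ * m₂ ∧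
      m₁.totalDegree < m.totalDegree ∧ m₂.totalDegree < m.totalDegree := by
  obtain ⟨d, rfl⟩ := hm
  have : NeZero p := ⟨by omega⟩
  rw [totalDegree_monomial_one] at hdeg
  obtain ⟨e, hed, he0, hep, he⟩ := Finsupp.exists_le_prod_pow_eq_one_of_pow_eq_one
    (rhoCoeff lam) (rhoCoeff_pow_eq_one lam fun i => (hlam i).1) d (by omega)
  obtain ⟨e', rfl⟩ := exists_add_of_le hed
  rw [map_add] at hdeg
  have he' : (e'.prod fun v k => rhoCoeff lam v ^ k) = 1 := by
    rwa [rhoMap_monomial_one_eq_self_iff, Finsupp.prod_add_index' (fun _ => pow_zero _)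
      (fun _ _ _ => pow_add _ _ _), he, one_mul] at hρ
  have he0' : 0 < e.degree := Nat.pos_of_ne_zero ((Finsupp.degree_eq_zero_iff e).not.2 he0)
  refine ⟨monomial e 1, monomial e' 1, ⟨e, rfl⟩, ⟨e', rfl⟩,
    (rhoMap_monomial_one_eq_self_iff lam e).2 he, (rhoMap_monomial_one_eq_self_iff lam e').2 he',
    by rw [monomial_mul, one_mul], ?_, ?_⟩ <;>
  · simp only [totalDegree_monomial_one, map_add]
    omega

/-- For `p ≥ 3` an odd integer, every `ρ`-invariant monomial of degree at least
`p+1` is a product of two `ρ`-invariant monomials of strictly smaller degree. -/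
theorem rho_invariant_monomial_decomposition
    {F : Type*} [Field F] [CharP F 2] {r s p : ℕ} (hp : 3 ≤ p) (hodd : Odd p)
    (ζ : F) (hζ : IsPrimitiveRoot ζ p)
    (lam : Fin r → F) (hlam : ∀ i, lam i ^ p = 1 ∧ lam i ≠ 1)
    (m : MvPolynomial (DVar r s) F) (hm : IsMonomial m) (hρ : rhoMap F r s lam m = m)
    (hdeg : p + 1 ≤ m.totalDegree) :
    ∃ m₁ m₂ : MvPolynomial (DVar r s) F,
      IsMonomial m₁ ∧ IsMonomial m₂ ∧
      rhoMap F r s lam m₁ = m₁ ∧ rhoMap F r s lam m₂ = m₂ ∧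
      m = m₁ * m₂ ∧
      m₁.totalDegree < m.totalDegree ∧ m₂.totalDegree < m.totalDegree :=
  rho_invariant_monomial_decomposition_general hp lam hlam m hm hρ hdeg
end
end
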